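/- Let u = [u₁ᵀ, …, u_Mᵀ]ᵀ with u_m ∈ ℂ^D, and define μ = max_m √M ‖u_m‖₂ / ‖u‖₂. If μ ≤ √M/2, then ‖u‖₂² − max_m ‖u_m‖₂² ≥ ‖u‖₂²/2; consequently the matrix ‖u‖₂² P_{u⊥} − Υ, where Υ = Σ_m (e_m e_m*) ⊗ ‖u_m‖₂² P_{u_m⊥}, is positive semidefinite with kernel containing u and smallest nonzero eigenvalue at least ‖u‖₂²/2. -/
import Mathlib


/-- Euclidean norm of a finite complex vector. -/
noncomputable def vnorm {ι : Type*} [Fintype ι] (v : ι → ℂ) : ℝ :=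
  Real.sqrt (∑ i, Complex.normSq (v i))

/-- Standard complex inner product, conjugate-linear in the first argument. -/
noncomputable def cip {ι : Type*} [Fintype ι] (a b : ι → ℂ) : ℂ :=
  ∑ i, (starRingEnd ℂ) (a i) * b i

/-- Orthogonal projection onto the orthogonal complement of `a`. -/
noncomputable def Pperp {ι : Type*} [Fintype ι] (a v : ι → ℂ) : ι → ℂ :=
  v - (cip a v / ((vnorm a ^ 2 : ℝ) : ℂ)) • a

section Aux
variable {ι : Type*} [Fintype ι]

lemma vnorm_sq (a : ι → ℂ) : (vnorm a) ^ 2 = ∑ i, Complex.normSq (a i) :=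
  Real.sq_sqrt (Finset.sum_nonneg fun i _ => Complex.normSq_nonneg _)

lemma vnorm_nonneg (a : ι → ℂ) : 0 ≤ vnorm a := Real.sqrt_nonneg _

lemma vnorm_eq_zero {a : ι → ℂ} (h : vnorm a = 0) : a = 0 := by
  have h2 : ∑ i, Complex.normSq (a i) = 0 := by
    have := vnorm_sq a; rw [h] at this; simpa using this.symm
  have hz := (Finset.sum_eq_zero_iff_of_nonneg
    (fun i _ => Complex.normSq_nonneg (a i))).mp h2
  funext i
  exact Complex.normSq_eq_zero.mp (hz i (Finset.mem_univ i))

lemma cip_self (a : ι → ℂ) : cip a a = ((vnorm a ^ 2 : ℝ) : ℂ) := by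
  rw [vnorm_sq]
  push_cast
  unfold cip
  exact Finset.sum_congr rfl fun i _ => by rw [Complex.normSq_eq_conj_mul_self]

lemma cip_conj (a b : ι → ℂ) : cip b a = (starRingEnd ℂ) (cip a b) := by
  unfold cip
  rw [map_sum]
  exact Finset.sum_congr rfl fun i _ => by simp [mul_comm]

lemma cip_sub (a b c : ι → ℂ) : cip a (b - c) = cip a b - cip a c := by
  unfold cip
  rw [← Finset.sum_sub_distrib]
  exact Finset.sum_congr rfl fun i _ => by simp [mul_sub]

lemma cip_smul (a : ι → ℂ) (c : ℂ) (b : ι → ℂ) : cip a (c • b) = c * cip a b := by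
  unfold cip
  rw [Finset.mul_sum]
  exact Finset.sum_congr rfl fun i _ => by simp; ring

lemma cip_add_smul_left (a x b : ι → ℂ) (c : ℂ) :
    cip (x + c • a) b = cip x b + (starRingEnd ℂ) c * cip a b := by
  unfold cip
  rw [Finset.mul_sum, ← Finset.sum_add_distrib]
  exact Finset.sum_congr rfl fun i _ => by simp [add_mul]; ring

lemma Pperp_self (a : ι → ℂ) : Pperp a a = 0 := by
  by_cases h : vnorm a = 0
  · have ha := vnorm_eq_zero h
    subst ha; funext i; simp [Pperp]
  · have hr : ((vnorm a ^ 2 : ℝ) : ℂ) ≠ 0 := by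
      simpa using pow_ne_zero 2 h
    unfold Pperp
    rw [cip_self, div_self hr]
    simp

lemma cip_pperp (a v : ι → ℂ) : cip a (Pperp a v) = 0 := by
  by_cases h : vnorm a = 0
  · have ha := vnorm_eq_zero h
    subst ha; simp [cip, Pperp]
  · have hr : ((vnorm a ^ 2 : ℝ) : ℂ) ≠ 0 := by
      simpa using pow_ne_zero 2 h
    unfold Pperp
    rw [cip_sub, cip_smul, cip_self, div_mul_cancel₀ _ hr, sub_self]

lemma Pperp_sub_smul (a x : ι → ℂ) (c : ℂ) : Pperp a (x - c • a) = Pperp a x := by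
  by_cases h : vnorm a = 0
  · have ha := vnorm_eq_zero h
    subst ha; funext i; simp [Pperp]
  · have hr : ((vnorm a ^ 2 : ℝ) : ℂ) ≠ 0 := by
      simpa using pow_ne_zero 2 h
    unfold Pperp
    rw [cip_sub, cip_smul, cip_self, sub_div, mul_div_cancel_right₀ _ hr]
    funext i
    simp [sub_smul]

lemma re_cip_pperp_le (a v : ι → ℂ) : (cip v (Pperp a v)).re ≤ vnorm v ^ 2 := by
  unfold Pperp
  rw [cip_sub, cip_smul, cip_conj a v, cip_self v]
  have hre : (cip a v / ((vnorm a ^ 2 : ℝ) : ℂ) * (starRingEnd ℂ) (cip a v)).re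
      = Complex.normSq (cip a v) / (vnorm a ^ 2) := by
    rw [div_mul_eq_mul_div, Complex.mul_conj, ← Complex.ofReal_div]
    exact Complex.ofReal_re _
  rw [Complex.sub_re, hre, Complex.ofReal_re]
  have h1 : (0:ℝ) ≤ Complex.normSq (cip a v) / (vnorm a ^ 2) :=
    div_nonneg (Complex.normSq_nonneg _) (sq_nonneg _)
  linarith

lemma vnorm_prod_sq {M D : ℕ} (U : Fin M × Fin D → ℂ) :
    vnorm U ^ 2 = ∑ m, vnorm (fun d => U (m, d)) ^ 2 := by
  simp only [vnorm_sq]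
  rw [Fintype.sum_prod_type]

end Aux

/-- for `u = [u₁ᵀ,…,u_Mᵀ]ᵀ` with `μ = max_m √M ‖u_m‖/‖u‖ ≤ √M/2`, one has
`‖u‖² − max_m ‖u_m‖² ≥ ‖u‖²/2`, and the operator
`A = ‖u‖² P_{u⊥} − Σ_m (e_m e_m*) ⊗ ‖u_m‖² P_{u_m⊥}` is positive semidefinite with
`A u = 0` and smallest nonzero eigenvalue (its quadratic form on `u^⊥`) at least
`‖u‖²/2`. -/
theorem stmt9 (M D : ℕ) (u : Fin M → Fin D → ℂ)
    (U : Fin M × Fin D → ℂ) (hU : U = fun p => u p.1 p.2) (hUne : U ≠ 0)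
    (A : (Fin M × Fin D → ℂ) → (Fin M × Fin D → ℂ))
    (hA : A = fun v p =>
      ((vnorm U ^ 2 : ℝ) : ℂ) * Pperp U v p -
        ((vnorm (u p.1) ^ 2 : ℝ) : ℂ) * Pperp (u p.1) (fun d => v (p.1, d)) p.2)
    (hμ : ∀ m, Real.sqrt M * vnorm (u m) / vnorm U ≤ Real.sqrt M / 2) :
    (∀ m, vnorm U ^ 2 - vnorm (u m) ^ 2 ≥ vnorm U ^ 2 / 2) ∧
    A U = 0 ∧
    (∀ v, 0 ≤ (cip v (A v)).re) ∧
    (∀ v, cip U v = 0 →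
      (vnorm U ^ 2 / 2) * vnorm v ^ 2 ≤ (cip v (A v)).re) := by
  have hU0 : vnorm U ≠ 0 := fun h => hUne (vnorm_eq_zero h)
  have hUpos : 0 < vnorm U := lt_of_le_of_ne (vnorm_nonneg _) (Ne.symm hU0)
  have hr0 : (0:ℝ) ≤ vnorm U ^ 2 := sq_nonneg _
  have hrC : ((vnorm U ^ 2 : ℝ) : ℂ) ≠ 0 := by
    simpa using pow_ne_zero 2 hU0
  have hM : M ≠ 0 := by
    rintro rfl
    exact hUne (funext fun p => p.1.elim0)
  have hMpos : 0 < Real.sqrt M := Real.sqrt_pos.mpr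
    (by exact_mod_cast Nat.pos_of_ne_zero hM)
  have hUrow : ∀ m, (fun d => U (m, d)) = u m := by
    intro m; funext d; rw [hU]
  -- ‖u m‖ ≤ ‖U‖/2
  have hhalf : ∀ m, vnorm (u m) ≤ vnorm U / 2 := by
    intro m
    have h := hμ m
    rw [div_le_iff₀ hUpos] at h
    have h1 : Real.sqrt M * vnorm (u m) ≤ Real.sqrt M * (vnorm U / 2) := by
      calc Real.sqrt M * vnorm (u m) ≤ Real.sqrt M / 2 * vnorm U := h
        _ = Real.sqrt M * (vnorm U / 2) := by ring
    exact le_of_mul_le_mul_left h1 hMpos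
  have hsq : ∀ m, vnorm (u m) ^ 2 ≤ vnorm U ^ 2 / 4 := by
    intro m
    nlinarith [vnorm_nonneg (u m), hhalf m, vnorm_nonneg U]
  -- Part 1
  have part1 : ∀ m, vnorm U ^ 2 - vnorm (u m) ^ 2 ≥ vnorm U ^ 2 / 2 := by
    intro m; have := hsq m; linarith
  -- expansion of the quadratic form
  have hexpand : ∀ w v : Fin M × Fin D → ℂ,
      cip w (A v) = ((vnorm U ^ 2 : ℝ) : ℂ) * cip w (Pperp U v)
        - ∑ m, ((vnorm (u m) ^ 2 : ℝ) : ℂ) *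
            cip (fun d => w (m, d)) (Pperp (u m) (fun d => v (m, d))) := by
    intro w v
    rw [hA]
    simp only [cip, mul_sub, Finset.sum_sub_distrib]
    congr 1
    · rw [Finset.mul_sum]
      exact Finset.sum_congr rfl fun p _ => by ring
    · rw [Fintype.sum_prod_type]
      exact Finset.sum_congr rfl fun m _ => by
        rw [Finset.mul_sum]
        exact Finset.sum_congr rfl fun d _ => by ring
  -- A U = 0
  have part2 : A U = 0 := by
    rw [hA]
    funext p
    simp only [hUrow, Pperp_self, Pi.zero_apply, mul_zero, sub_zero]
  -- Part 4 (quadratic form on u^perp)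
  have part4 : ∀ v, cip U v = 0 →
      (vnorm U ^ 2 / 2) * vnorm v ^ 2 ≤ (cip v (A v)).re := by
    intro v hv
    have hPv : Pperp U v = v := by
      unfold Pperp; rw [hv]; simp
    have h2 := hexpand v v
    rw [hPv, cip_self v, ← Complex.ofReal_mul] at h2
    rw [h2, Complex.sub_re, Complex.ofReal_re, Complex.re_sum]
    have hbound : ∑ m, (((vnorm (u m) ^ 2 : ℝ) : ℂ) *
          cip (fun d => v (m, d)) (Pperp (u m) (fun d => v (m, d)))).re
        ≤ (vnorm U ^ 2 / 4) * vnorm v ^ 2 := by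
      rw [vnorm_prod_sq v, Finset.mul_sum]
      apply Finset.sum_le_sum
      intro m _
      rw [Complex.re_ofReal_mul]
      calc vnorm (u m) ^ 2 * (cip (fun d => v (m, d)) (Pperp (u m) (fun d => v (m, d)))).re
          ≤ vnorm (u m) ^ 2 * vnorm (fun d => v (m, d)) ^ 2 :=
            mul_le_mul_of_nonneg_left (re_cip_pperp_le _ _) (sq_nonneg _)
        _ ≤ vnorm U ^ 2 / 4 * vnorm (fun d => v (m, d)) ^ 2 :=
            mul_le_mul_of_nonneg_right (hsq m) (sq_nonneg _)
    nlinarith [sq_nonneg (vnorm v), mul_nonneg hr0 (sq_nonneg (vnorm v))]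
  -- Part 3 (psd)
  have part3 : ∀ v, 0 ≤ (cip v (A v)).re := by
    intro v
    set c : ℂ := cip U v / ((vnorm U ^ 2 : ℝ) : ℂ) with hc
    set w : Fin M × Fin D → ℂ := v - c • U with hw
    have hUw : cip U w = 0 := by
      rw [hw, cip_sub, cip_smul, cip_self, hc, div_mul_cancel₀ _ hrC, sub_self]
    have hAw : A w = A v := by
      rw [hA]
      funext p
      have h1 : Pperp U w = Pperp U v := by
        rw [hw]; exact Pperp_sub_smul U v c
      have h2 : (fun d => w (p.1, d)) = (fun d => v (p.1, d)) - c • (u p.1) := by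
        funext d
        show v (p.1, d) - c * U (p.1, d) = v (p.1, d) - c * u p.1 d
        rw [hU]
      simp only [h1, h2, Pperp_sub_smul]
    have hUAw : cip U (A w) = 0 := by
      rw [hexpand U w]
      simp only [hUrow, cip_pperp]
      simp
    have hvw : cip v (A v) = cip w (A w) := by
      have hv' : v = w + c • U := by
        funext p
        show v p = (v p - c * U p) + c * U p
        ring
      rw [← hAw]
      conv_lhs => rw [hv']
      rw [cip_add_smul_left, hUAw, mul_zero, add_zero]
    rw [hvw]
    have := part4 w hUw
    nlinarith [sq_nonneg (vnorm w), mul_nonneg hr0 (sq_nonneg (vnorm w))]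
  exact ⟨part1, part2, part3, part4⟩
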